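/- Let φ: ℝ → ℝ be twice differentiable with φ'' Lipschitz with constant C_L > 0, let X₁,…,X_n ∈ ℝ^p, and let β, β₀ ∈ ℝ^p with Δ = β − β₀. Define υ = ∫₀¹ [ (1/n)Σ_{i=1}^n φ''(X_iᵀ(β₀ + tΔ)) X_i X_iᵀ − (1/n)Σ_{i=1}^n φ''(X_iᵀβ) X_i X_iᵀ ] Δ dt ∈ ℝ^p. Then ‖υ‖_∞ ≤ C_L · (max_{i,j} |X_{ij}|) · (1/n)Σ_{i=1}^n (X_iᵀΔ)². -/

import Mathlib

/-! For `t ∈ [0, 1]` the two Hessian arguments `Xᵢ ⬝ (β₀ + tΔ)` and `Xᵢ ⬝ β` differ by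
`(t - 1) Xᵢ ⬝ Δ`, so the Lipschitz bound makes the `i`-th weight at most `C_L |Xᵢ ⬝ Δ|`.
Contracting the Hessian difference with `Δ` produces one more factor `Xᵢ ⬝ Δ` and one entry
`Xᵢⱼ`, which gives the integrand the bound `C_L · max |Xᵢⱼ| · (1/n) Σᵢ (Xᵢ ⬝ Δ)²`, uniformly
in `t`; integrating over `[0, 1]` keeps it. -/

open Finset Matrix

lemma nonneg_of_abs_sub_le_mul_abs_sub {f : ℝ → ℝ} {C : ℝ}
    (hf : ∀ u v, |f u - f v| ≤ C * |u - v|) : 0 ≤ C := by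
  simpa using (abs_nonneg _).trans (hf 1 0)

lemma abs_le_iSup_iSup_abs {ι κ : Type*} [Finite ι] [Finite κ] (X : ι → κ → ℝ)
    (i : ι) (j : κ) : |X i j| ≤ ⨆ i, ⨆ j, |X i j| :=
  (le_ciSup (Set.finite_range _).bddAbove j).trans
    (le_ciSup (f := fun i => ⨆ j, |X i j|) (Set.finite_range _).bddAbove i)

lemma sum_sub_weighted_gram_mul {ι κ R : Type*} [Fintype ι] [Fintype κ] [CommRing R]
    (a : R) (c d : ι → R) (X : ι → κ → R) (j : κ) (v : κ → R) :
    ∑ k, ((a * ∑ i, c i * X i j * X i k) - (a * ∑ i, d i * X i j * X i k)) * v k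
      = a * ∑ i, (c i - d i) * X i j * (X i ⬝ᵥ v) := by
  simp only [dotProduct, ← mul_sub, ← sum_sub_distrib, mul_sum, sum_mul]
  rw [sum_comm]
  exact sum_congr rfl fun i _ => sum_congr rfl fun k _ => by ring

lemma dotProduct_segment_sub {κ R : Type*} [Fintype κ] [CommRing R] (x β₀ β : κ → R) (t : R) :
    x ⬝ᵥ (β₀ + t • (β - β₀)) - x ⬝ᵥ β = (t - 1) * x ⬝ᵥ (β - β₀) := by
  simp only [dotProduct, mul_sum, ← sum_sub_distrib]
  refine sum_congr rfl fun l _ => ?_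
  simp only [Pi.add_apply, Pi.smul_apply, Pi.sub_apply, smul_eq_mul]
  ring

lemma abs_sub_le_of_mem_segment {κ : Type*} [Fintype κ] {f : ℝ → ℝ} {C : ℝ}
    (hf : ∀ u v, |f u - f v| ≤ C * |u - v|) (x β₀ β : κ → ℝ) {t : ℝ} (ht : t ∈ Set.Icc 0 1) :
    |f (x ⬝ᵥ (β₀ + t • (β - β₀))) - f (x ⬝ᵥ β)| ≤ C * |x ⬝ᵥ (β - β₀)| := by
  have hC := nonneg_of_abs_sub_le_mul_abs_sub hf
  have ht₁ : |t - 1| ≤ 1 := by rw [abs_le]; constructor <;> linarith [ht.1, ht.2]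
  calc |f (x ⬝ᵥ (β₀ + t • (β - β₀))) - f (x ⬝ᵥ β)|
      ≤ C * (|t - 1| * |x ⬝ᵥ (β - β₀)|) := by
        rw [← abs_mul, ← dotProduct_segment_sub]; exact hf _ _
    _ ≤ C * |x ⬝ᵥ (β - β₀)| := by
        gcongr; exact mul_le_of_le_one_left (abs_nonneg _) ht₁

lemma abs_mul_sum_mul_mul_le {ι : Type*} [Fintype ι] {a C M : ℝ} (ha : 0 ≤ a) (hC : 0 ≤ C)
    {w x s : ι → ℝ} (hw : ∀ i, |w i| ≤ C * |s i|) (hx : ∀ i, |x i| ≤ M) :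
    |a * ∑ i, w i * x i * s i| ≤ C * M * (a * ∑ i, s i ^ 2) := by
  have hterm : ∀ i, |w i * x i * s i| ≤ C * M * s i ^ 2 := fun i => by
    calc |w i * x i * s i| = |w i| * |x i| * |s i| := by rw [abs_mul, abs_mul]
      _ ≤ C * |s i| * M * |s i| := by gcongr; exacts [hw i, hx i]
      _ = C * M * s i ^ 2 := by rw [← sq_abs (s i)]; ring
  calc |a * ∑ i, w i * x i * s i| ≤ a * ∑ i, |w i * x i * s i| := by
        rw [abs_mul, abs_of_nonneg ha]; gcongr; exact abs_sum_le_sum_abs _ _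
    _ ≤ a * ∑ i, C * M * s i ^ 2 := by gcongr with i; exact hterm i
    _ = C * M * (a * ∑ i, s i ^ 2) := by rw [← mul_sum]; ring

theorem sup_norm_taylor_remainder_gradient_bound_general
    (n p : ℕ)
    (φ'' : ℝ → ℝ) (CL : ℝ)
    (hLip : ∀ u v : ℝ, |φ'' u - φ'' v| ≤ CL * |u - v|)
    (X : Fin n → Fin p → ℝ) (β β₀ : Fin p → ℝ) :
    ‖(fun j : Fin p => ∫ t in (0:ℝ)..1, ∑ k,
        (((n : ℝ)⁻¹ * ∑ i, φ'' (∑ l, X i l * (β₀ l + t * (β l - β₀ l))) * X i j * X i k)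
          - ((n : ℝ)⁻¹ * ∑ i, φ'' (∑ l, X i l * β l) * X i j * X i k))
        * (β k - β₀ k))‖ ≤
      CL * (⨆ i : Fin n, ⨆ j : Fin p, |X i j|) *
        ((n : ℝ)⁻¹ * ∑ i, (∑ l, X i l * (β l - β₀ l)) ^ 2) := by
  have hCL := nonneg_of_abs_sub_le_mul_abs_sub hLip
  have hM : 0 ≤ ⨆ i : Fin n, ⨆ j : Fin p, |X i j| :=
    Real.iSup_nonneg fun i => Real.iSup_nonneg fun j => abs_nonneg _
  rw [pi_norm_le_iff_of_nonneg (by positivity)]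
  intro j
  refine (intervalIntegral.norm_integral_le_of_norm_le_const fun t ht => ?_).trans_eq
    (by rw [sub_zero, abs_one, mul_one])
  rw [Set.uIoc_of_le zero_le_one] at ht
  rw [Real.norm_eq_abs, sum_sub_weighted_gram_mul]
  exact abs_mul_sum_mul_mul_le (by positivity) hCL
    (fun i => abs_sub_le_of_mem_segment hLip (X i) β₀ β (Set.Ioc_subset_Icc_self ht))
    (fun i => abs_le_iSup_iSup_abs X i j)

/-- Sup-norm bound on the Taylor remainder of the gradient of the empirical
GLM loss.  With `Δ = β − β₀` and
`υ = ∫₀¹ [ (1/n)Σᵢ φ''(Xᵢᵀ(β₀ + tΔ))XᵢXᵢᵀ − (1/n)Σᵢ φ''(Xᵢᵀβ)XᵢXᵢᵀ ] Δ dt`,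
one has `‖υ‖_∞ ≤ C_L · (maxᵢⱼ |Xᵢⱼ|) · (1/n)Σᵢ (XᵢᵀΔ)²`. -/
theorem sup_norm_taylor_remainder_gradient_bound
    (n p : ℕ) (hn : 0 < n)
    (φ'' : ℝ → ℝ) (CL : ℝ) (hCL : 0 < CL)
    (hLip : ∀ u v : ℝ, |φ'' u - φ'' v| ≤ CL * |u - v|)
    (X : Fin n → Fin p → ℝ) (β β₀ : Fin p → ℝ) :
    ‖(fun j : Fin p => ∫ t in (0:ℝ)..1, ∑ k,
        (((n : ℝ)⁻¹ * ∑ i, φ'' (∑ l, X i l * (β₀ l + t * (β l - β₀ l))) * X i j * X i k)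
          - ((n : ℝ)⁻¹ * ∑ i, φ'' (∑ l, X i l * β l) * X i j * X i k))
        * (β k - β₀ k))‖ ≤
      CL * (⨆ i : Fin n, ⨆ j : Fin p, |X i j|) *
        ((n : ℝ)⁻¹ * ∑ i, (∑ l, X i l * (β l - β₀ l)) ^ 2) :=
  sup_norm_taylor_remainder_gradient_bound_general n p φ'' CL hLip X β β₀
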